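/- W satisfies the pentagon equation: as linear endomorphisms of 𝒜⊗𝒜⊗𝒜 one has W₂₃ ∘ W₁₂ = W₁₂ ∘ W₁₃ ∘ W₂₃, where W₁₂ = W⊗id, W₂₃ = id⊗W, and W₁₃ = (Σ⊗id) ∘ W₂₃ ∘ (Σ⊗id) with Σ the flip a⊗b ↦ b⊗a on 𝒜⊗𝒜. (Equivalently, since W is invertible, W₂₃ W₁₂ W₂₃⁻¹ = W₁₂ W₁₃.) -/
import Mathlib


/- Setting: a finite quantum group `A` (finite-dimensional Hopf *-algebra over `ℂ`
admitting a faithful positive functional).  `W (a ⊗ b) = Δ(a)(1 ⊗ b)`.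
STATEMENT 4: the pentagon equation `W₂₃ ∘ W₁₂ = W₁₂ ∘ W₁₃ ∘ W₂₃` holds on `A ⊗ A ⊗ A`,
where `W₁₂ = W ⊗ id`, `W₂₃ = id ⊗ W` and `W₁₃ = (Σ ⊗ id) ∘ W₂₃ ∘ (Σ ⊗ id)` with `Σ` the
flip of `A ⊗ A`.  (We realize `A ⊗ A ⊗ A` as `A ⊗ (A ⊗ A)`, transporting maps acting on
the first two legs via the associator.) -/

open scoped TensorProduct ComplexOrder
open TensorProduct

section
variable {A : Type*} [Ring A] [HopfAlgebra ℂ A] [StarRing A] [StarModule ℂ A]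
  [FiniteDimensional ℂ A]

/-- The multiplicative unitary `W : a ⊗ b ↦ Δ(a)(1 ⊗ b)`. -/
noncomputable def Wmap : A ⊗[ℂ] A →ₗ[ℂ] A ⊗[ℂ] A :=
  LinearMap.mul' ℂ (A ⊗[ℂ] A) ∘ₗ
    TensorProduct.map (Coalgebra.comul (R := ℂ)) (TensorProduct.mk ℂ A A 1)

/-- Transport of an endomorphism of `A ⊗ A` to one of `A ⊗ (A ⊗ A)` acting on legs 1,2. -/
noncomputable def leg12 (T : A ⊗[ℂ] A →ₗ[ℂ] A ⊗[ℂ] A) :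
    A ⊗[ℂ] (A ⊗[ℂ] A) →ₗ[ℂ] A ⊗[ℂ] (A ⊗[ℂ] A) :=
  (TensorProduct.assoc ℂ A A A).toLinearMap ∘ₗ
    TensorProduct.map T LinearMap.id ∘ₗ (TensorProduct.assoc ℂ A A A).symm.toLinearMap

/-- `W₁₂ = W ⊗ id`. -/
noncomputable def W12 : A ⊗[ℂ] (A ⊗[ℂ] A) →ₗ[ℂ] A ⊗[ℂ] (A ⊗[ℂ] A) := leg12 Wmap

/-- `W₂₃ = id ⊗ W`. -/
noncomputable def W23 : A ⊗[ℂ] (A ⊗[ℂ] A) →ₗ[ℂ] A ⊗[ℂ] (A ⊗[ℂ] A) :=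
  TensorProduct.map LinearMap.id Wmap

/-- `Σ ⊗ id`, where `Σ` is the flip on `A ⊗ A`. -/
noncomputable def Sigma12 : A ⊗[ℂ] (A ⊗[ℂ] A) →ₗ[ℂ] A ⊗[ℂ] (A ⊗[ℂ] A) :=
  leg12 (TensorProduct.comm ℂ A A).toLinearMap

/-- `W₁₃ = (Σ ⊗ id) ∘ W₂₃ ∘ (Σ ⊗ id)`. -/
noncomputable def W13 : A ⊗[ℂ] (A ⊗[ℂ] A) →ₗ[ℂ] A ⊗[ℂ] (A ⊗[ℂ] A) :=
  Sigma12 ∘ₗ W23 ∘ₗ Sigma12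


set_option synthInstance.maxHeartbeats 1000000
set_option maxHeartbeats 1000000
set_option linter.unusedSectionVars false
set_option linter.unusedVariables false

lemma Wmap_tmul (a b : A) :
    Wmap (a ⊗ₜ[ℂ] b) = Coalgebra.comul (R := ℂ) a * ((1 : A) ⊗ₜ[ℂ] b) := by
  simp [Wmap, LinearMap.mul'_apply]

lemma leg12_tmul (T : A ⊗[ℂ] A →ₗ[ℂ] A ⊗[ℂ] A) (a b c : A) :
    leg12 T (a ⊗ₜ[ℂ] (b ⊗ₜ[ℂ] c)) =
      (TensorProduct.assoc ℂ A A A) (T (a ⊗ₜ[ℂ] b) ⊗ₜ[ℂ] c) := by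
  simp [leg12]

lemma Sigma12_tmul (a b c : A) :
    Sigma12 (a ⊗ₜ[ℂ] (b ⊗ₜ[ℂ] c)) = (b ⊗ₜ[ℂ] (a ⊗ₜ[ℂ] c) : A ⊗[ℂ] (A ⊗[ℂ] A)) := by
  simp [Sigma12, leg12_tmul]

lemma W12_tmul (a b c : A) :
    W12 (a ⊗ₜ[ℂ] (b ⊗ₜ[ℂ] c)) =
      (TensorProduct.assoc ℂ A A A)
        ((Coalgebra.comul (R := ℂ) a * ((1 : A) ⊗ₜ[ℂ] b)) ⊗ₜ[ℂ] c) := by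
  rw [W12, leg12_tmul, Wmap_tmul]

lemma sub2 (w : A ⊗[ℂ] A) (q u v : A) :
    (TensorProduct.assoc ℂ A A A) ((w * ((1 : A) ⊗ₜ[ℂ] u)) ⊗ₜ[ℂ] (q * v)) =
      LinearMap.lTensor A (LinearMap.mulRight ℂ (u ⊗ₜ[ℂ] v))
        ((TensorProduct.assoc ℂ A A A) (w ⊗ₜ[ℂ] q)) := by
  induction w using TensorProduct.induction_on with
  | zero => simp only [zero_mul, zero_tmul, map_zero]
  | tmul r s => simp [Algebra.TensorProduct.tmul_mul_tmul]
  | add w₁ w₂ h₁ h₂ =>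
      simp only [add_mul, add_tmul, map_add, h₁, h₂]

lemma claimR_core (x : A ⊗[ℂ] A) (u v : A) :
    W12 (Sigma12 (u ⊗ₜ[ℂ] (x * ((1 : A) ⊗ₜ[ℂ] v)))) =
      LinearMap.lTensor A (LinearMap.mulRight ℂ (u ⊗ₜ[ℂ] v))
        ((TensorProduct.assoc ℂ A A A)
          (LinearMap.rTensor A (Coalgebra.comul (R := ℂ)) x)) := by
  induction x using TensorProduct.induction_on with
  | zero => simp only [zero_mul, tmul_zero, map_zero]
  | tmul p q =>
      rw [Algebra.TensorProduct.tmul_mul_tmul, mul_one, Sigma12_tmul, W12_tmul,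
        LinearMap.rTensor_tmul, ← sub2]
  | add x₁ x₂ h₁ h₂ =>
      simp only [add_mul, tmul_add, map_add, h₁, h₂, LinearMap.rTensor_tmul]

lemma claimR (a : A) (y : A ⊗[ℂ] A) :
    W12 (W13 (a ⊗ₜ[ℂ] y)) =
      LinearMap.lTensor A (LinearMap.mulRight ℂ y)
        ((TensorProduct.assoc ℂ A A A)
          (LinearMap.rTensor A (Coalgebra.comul (R := ℂ)) (Coalgebra.comul a))) := by
  induction y using TensorProduct.induction_on with
  | zero =>
      simp [LinearMap.mulRight_zero_eq_zero]
  | tmul u v =>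
      rw [W13]
      simp only [LinearMap.comp_apply]
      rw [Sigma12_tmul, W23, map_tmul, LinearMap.id_apply, Wmap_tmul, claimR_core]
  | add y₁ y₂ h₁ h₂ =>
      have : LinearMap.mulRight ℂ (y₁ + y₂) =
          LinearMap.mulRight ℂ (A := A ⊗[ℂ] A) y₁ + LinearMap.mulRight ℂ y₂ := by
        ext z; simp [mul_add]
      simp only [tmul_add, map_add, h₁, h₂, this, LinearMap.lTensor_add,
        LinearMap.add_apply]

lemma claimL (x : A ⊗[ℂ] A) (b c : A) :
    W23 ((TensorProduct.assoc ℂ A A A) ((x * ((1 : A) ⊗ₜ[ℂ] b)) ⊗ₜ[ℂ] c)) =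
      LinearMap.lTensor A (LinearMap.mulRight ℂ (Wmap (b ⊗ₜ[ℂ] c)))
        (LinearMap.lTensor A (Coalgebra.comul (R := ℂ)) x) := by
  induction x using TensorProduct.induction_on with
  | zero => simp only [zero_mul, zero_tmul, map_zero]
  | tmul p q =>
      rw [Algebra.TensorProduct.tmul_mul_tmul, mul_one]
      simp only [assoc_tmul, W23, map_tmul, LinearMap.id_apply, LinearMap.lTensor_tmul]
      rw [Wmap_tmul, Wmap_tmul, Bialgebra.comul_mul, mul_assoc,
        LinearMap.mulRight_apply]
  | add x₁ x₂ h₁ h₂ =>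
      simp only [add_mul, add_tmul, map_add, h₁, h₂]

/-- The pentagon equation `W₂₃ W₁₂ = W₁₂ W₁₃ W₂₃`. -/
theorem W_pentagon
    -- `A` admits a faithful positive functional
    (f : A →ₗ[ℂ] ℂ)
    (f_pos : ∀ a : A, 0 ≤ f (star a * a))
    (f_faithful : ∀ a : A, f (star a * a) = 0 → a = 0) :
    W23 ∘ₗ W12 = W12 ∘ₗ W13 ∘ₗ W23 (A := A) := by
  apply TensorProduct.ext'
  intro a y
  induction y using TensorProduct.induction_on with
  | zero => simp
  | tmul b c =>
      simp only [LinearMap.comp_apply]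
      rw [W12_tmul, claimL]
      rw [show (W23 (a ⊗ₜ[ℂ] (b ⊗ₜ[ℂ] c)) : A ⊗[ℂ] (A ⊗[ℂ] A)) =
        a ⊗ₜ[ℂ] Wmap (b ⊗ₜ[ℂ] c) from by simp [W23]]
      rw [claimR]
      congr 1
      exact (Coalgebra.coassoc_apply (R := ℂ) a).symm
  | add y₁ y₂ h₁ h₂ =>
      simp only [tmul_add, map_add, h₁, h₂]

end
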